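/- arXiv:1311.0531 — 2 statements merged into one kernel-verified Lean document; each statement's English description precedes it below -/
import Mathlib

section
/- Let A and B be finite non-collinear subsets of ℝ² such that every point of A + B has a unique representation, i.e., whenever a₁ + b₁ = a₂ + b₂ with a₁, a₂ ∈ A and b₁, b₂ ∈ B, one has a₁ = a₂ and b₁ = b₂. Then 2 i_{A+B} + b_{A+B} − 2 ≥ |B| · (2 i_A + b_A − 2) + (2 i_B + b_B − 2). -/
open scoped Pointwise Classical RealInnerProductSpace

noncomputable section

/-- The plane `ℝ²`. -/
abbrev Pt : Type := EuclideanSpace ℝ (Fin 2)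

/-- `b_A`: the number of points of `A` on the frontier of the convex hull of `A`. -/
def bdryCard (A : Finset Pt) : ℕ :=
  (A.filter fun x => x ∈ frontier (convexHull ℝ (A : Set Pt))).card

/-- `i_A`: the number of points of `A` in the interior of the convex hull of `A`. -/
def intCard (A : Finset Pt) : ℕ :=
  (A.filter fun x => x ∈ interior (convexHull ℝ (A : Set Pt))).card

/-- `u` is an exterior normal to the convex hull of `A` at `x`,
i.e. `u·x = max {u·y : y ∈ A}` (for `x ∈ A`). -/
def IsExtNormal (A : Finset Pt) (u x : Pt) : Prop :=
  ∀ y ∈ A, ⟪u, y⟫ ≤ ⟪u, x⟫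

/-- `A_u`: the set of points of `A` where `u·x` is maximal. -/
def maxSet (A : Finset Pt) (u : Pt) : Finset Pt :=
  A.filter fun x => ∀ y ∈ A, ⟪u, y⟫ ≤ ⟪u, x⟫

/-- `C` is an arithmetic progression with difference `d`. -/
def IsAP (C : Finset Pt) (d : Pt) : Prop :=
  ∃ c : Pt, C = (Finset.range C.card).image fun k => c + (k : ℝ) • d

/-- `A_{v,upp}`: points of `A` having a nonzero exterior normal, all of whose
unit exterior normals `u` satisfy `u·v > 0`. -/
def upperSet (A : Finset Pt) (v : Pt) : Finset Pt :=
  A.filter fun a => (∃ u : Pt, u ≠ 0 ∧ IsExtNormal A u a) ∧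
    ∀ u : Pt, ‖u‖ = 1 → IsExtNormal A u a → 0 < ⟪u, v⟫

/-- `A_{v,low}`: points of `A` having a nonzero exterior normal, all of whose
unit exterior normals `u` satisfy `u·v < 0`. -/
def lowerSet (A : Finset Pt) (v : Pt) : Finset Pt :=
  A.filter fun a => (∃ u : Pt, u ≠ 0 ∧ IsExtNormal A u a) ∧
    ∀ u : Pt, ‖u‖ = 1 → IsExtNormal A u a → ⟪u, v⟫ < 0

/-- The unit vector `v` is not parallel to any side of the convex hull of `A`. -/
def NotParallelToSide (v : Pt) (A : Finset Pt) : Prop :=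
  ∀ u : Pt, ‖u‖ = 1 → ⟪u, v⟫ = 0 → (maxSet A u).card ≤ 1

/-- For `v = (v₁, v₂)`, the rotated vector `w = (v₂, -v₁)`. -/
def perp (v : Pt) : Pt := (EuclideanSpace.equiv (Fin 2) ℝ).symm ![v 1, -(v 0)]

/-- `r_{v,A}`: a point of `A` where `(perp v)·x` is maximal (the rightmost point of `A`);
it is unique when `v` is not parallel to any side of the convex hull of `A`. -/
def rPt (v : Pt) (A : Finset Pt) : Pt :=
  if h : ∃ x ∈ A, ∀ y ∈ A, ⟪perp v, y⟫ ≤ ⟪perp v, x⟫ then h.choose else 0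

/-- `l_{v,A}`: a point of `A` where `(perp v)·x` is minimal (the leftmost point of `A`);
it is unique when `v` is not parallel to any side of the convex hull of `A`. -/
def lPt (v : Pt) (A : Finset Pt) : Pt :=
  if h : ∃ x ∈ A, ∀ y ∈ A, ⟪perp v, x⟫ ≤ ⟪perp v, y⟫ then h.choose else 0


/-! With unique representation `|A + B| = |A| |B|`, and since `tr(X) = 2 |X| - b_X - 2`, the
inequality reduces to `b_{A+B} ≤ |B| b_A + b_B`. This follows from `b_{A+B} ≤ b_A b_B`: a point
`a + b` on the frontier of `[A + B] = [A] + [B]` has a nonzero supporting functional, which then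
supports `[A]` at `a` and `[B]` at `b`, so both lie on the respective frontiers. -/

theorem mem_frontier_of_forall_le {E : Type*} [AddCommGroup E] [TopologicalSpace E]
    [ContinuousAdd E] [Module ℝ E] [ContinuousSMul ℝ E] {s : Set E} {x : E} (hx : x ∈ s)
    {f : StrongDual ℝ E} (hf : f ≠ 0) (hmax : ∀ y ∈ s, f y ≤ f x) : x ∈ frontier s := by
  refine ⟨subset_closure hx, fun hint => ?_⟩
  have hsub : f '' interior s ⊆ interior (Set.Iic (f x)) :=
    interior_maximal (Set.image_subset_iff.2 fun y hy => hmax y (interior_subset hy))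
      (f.isOpenMap_of_ne_zero hf _ isOpen_interior)
  rw [interior_Iic] at hsub
  exact lt_irrefl _ (Set.mem_Iio.1 (hsub (Set.mem_image_of_mem f hint)))

section FiniteDimensional

variable {E : Type*} [NormedAddCommGroup E] [NormedSpace ℝ E] [FiniteDimensional ℝ E]

theorem Convex.exists_forall_le_of_mem_frontier {s : Set E} {x : E} (hs : Convex ℝ s)
    (hx : x ∈ frontier s) : ∃ f : StrongDual ℝ E, f ≠ 0 ∧ ∀ y ∈ s, f y ≤ f x := by
  by_cases hint : (interior s).Nonempty
  · exact geometric_hahn_banach_of_nonempty_interior_point hs hx.2 hint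
  -- Otherwise `s` spans a proper affine subspace, which is closed and so contains `x`;
  -- a nonzero functional vanishing on its direction is constant on it.
  have hx_span : x ∈ affineSpan ℝ s :=
    closure_minimal (subset_affineSpan ℝ s) (AffineSubspace.closed_of_finiteDimensional _) hx.1
  have hdir : (affineSpan ℝ s).direction < ⊤ := by
    rw [lt_top_iff_ne_top, Ne, AffineSubspace.direction_eq_top_iff_of_nonempty ⟨x, hx_span⟩,
      ← hs.interior_nonempty_iff_affineSpan_eq_top]
    exact hint
  obtain ⟨f, hf, hker⟩ := (affineSpan ℝ s).direction.exists_le_ker_of_lt_top hdir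
  refine ⟨LinearMap.toContinuousLinearMap f, by simpa using hf, fun y hy => ?_⟩
  have hyx : f (y - x) = 0 :=
    hker (AffineSubspace.vsub_mem_direction (subset_affineSpan ℝ s hy) hx_span)
  simp only [LinearMap.coe_toContinuousLinearMap', map_sub, sub_eq_zero] at hyx ⊢
  exact hyx.le

theorem Convex.mem_frontier_of_add_mem_frontier {s t : Set E} {a b : E} (hs : Convex ℝ s)
    (ht : Convex ℝ t) (ha : a ∈ s) (hb : b ∈ t) (hab : a + b ∈ frontier (s + t)) :
    a ∈ frontier s ∧ b ∈ frontier t := by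
  obtain ⟨f, hf, hmax⟩ := (hs.add ht).exists_forall_le_of_mem_frontier hab
  refine ⟨mem_frontier_of_forall_le ha hf fun y hy => ?_,
    mem_frontier_of_forall_le hb hf fun y hy => ?_⟩
  · have := hmax (y + b) (Set.add_mem_add hy hb)
    simp only [map_add] at this
    linarith
  · have := hmax (a + y) (Set.add_mem_add ha hy)
    simp only [map_add] at this
    linarith

end FiniteDimensional

theorem intCard_add_bdryCard (A : Finset Pt) : intCard A + bdryCard A = A.card := by
  have hfrontier : ∀ x ∈ A, x ∈ frontier (convexHull ℝ (A : Set Pt)) ↔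
      x ∉ interior (convexHull ℝ (A : Set Pt)) := fun x hx => by
    rw [(A.finite_toSet.isClosed_convexHull ℝ).frontier_eq, Set.mem_sdiff]
    exact and_iff_right (subset_convexHull ℝ _ hx)
  rw [intCard, bdryCard, Finset.filter_congr hfrontier]
  exact Finset.card_filter_add_card_filter_not _

theorem bdryCard_add_le (A B : Finset Pt) : bdryCard (A + B) ≤ bdryCard A * bdryCard B := by
  refine (Finset.card_le_card fun c hc => ?_).trans Finset.card_add_le
  obtain ⟨hc, hc_frontier⟩ := Finset.mem_filter.1 hc
  obtain ⟨a, ha, b, hb, rfl⟩ := Finset.mem_add.1 hc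
  rw [Finset.coe_add, convexHull_add] at hc_frontier
  obtain ⟨ha', hb'⟩ := (convex_convexHull ℝ _).mem_frontier_of_add_mem_frontier
    (convex_convexHull ℝ _) (subset_convexHull ℝ _ ha) (subset_convexHull ℝ _ hb) hc_frontier
  exact Finset.add_mem_add (Finset.mem_filter.2 ⟨ha, ha'⟩) (Finset.mem_filter.2 ⟨hb, hb'⟩)

theorem tr_unique_representation_general
    (A B : Finset Pt)
    (huniq : ∀ a₁ ∈ A, ∀ b₁ ∈ B, ∀ a₂ ∈ A, ∀ b₂ ∈ B,
      a₁ + b₁ = a₂ + b₂ → a₁ = a₂ ∧ b₁ = b₂) :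
    2 * (intCard (A + B) : ℤ) + (bdryCard (A + B) : ℤ) - 2 ≥
      (B.card : ℤ) * (2 * (intCard A : ℤ) + (bdryCard A : ℤ) - 2) +
        (2 * (intCard B : ℤ) + (bdryCard B : ℤ) - 2) := by
  have hcard : (A + B).card = A.card * B.card := Finset.card_add_iff.2 fun p hp q hq hpq =>
    Prod.ext_iff.2 (huniq p.1 hp.1 p.2 hp.2 q.1 hq.1 q.2 hq.2 hpq)
  have hbdry : bdryCard (A + B) ≤ B.card * bdryCard A + bdryCard B :=
    calc bdryCard (A + B) ≤ bdryCard A * bdryCard B := bdryCard_add_le A B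
      _ ≤ bdryCard A * B.card := Nat.mul_le_mul_left _ (Finset.card_filter_le _ _)
      _ ≤ B.card * bdryCard A + bdryCard B := by rw [mul_comm]; exact Nat.le_add_right _ _
  have hA := intCard_add_bdryCard A
  have hB := intCard_add_bdryCard B
  have hAB := intCard_add_bdryCard (A + B)
  rw [hcard] at hAB
  zify at hbdry hA hB hAB
  linear_combination hbdry + 2 * (B.card : ℤ) * hA + 2 * hB - 2 * hAB

theorem tr_unique_representation
    (A B : Finset Pt) (hA : ¬ Collinear ℝ (A : Set Pt)) (hB : ¬ Collinear ℝ (B : Set Pt))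
    (huniq : ∀ a₁ ∈ A, ∀ b₁ ∈ B, ∀ a₂ ∈ A, ∀ b₂ ∈ B,
      a₁ + b₁ = a₂ + b₂ → a₁ = a₂ ∧ b₁ = b₂) :
    2 * (intCard (A + B) : ℤ) + (bdryCard (A + B) : ℤ) - 2 ≥
      (B.card : ℤ) * (2 * (intCard A : ℤ) + (bdryCard A : ℤ) - 2) +
        (2 * (intCard B : ℤ) + (bdryCard B : ℤ) - 2) :=
  tr_unique_representation_general A B huniq
end
end

section
/- Let A and B be finite non-collinear subsets of ℝ² with i_A = i_B = 1, i.e., each of A and B has exactly one point in the interior of its convex hull. Then √(2 i_{A+B} + b_{A+B} − 2) ≥ √(2 i_A + b_A − 2) + √(2 i_B + b_B − 2). -/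
/-!
For a unit vector `u` let `A_u = maxSet A u` be the face of `[A]` with outer normal `u`, and drop
from it its last point in the direction `perp u`. For non-collinear `A` the truncated faces of
distinct directions are disjoint, and gift wrapping from a supporting line through a boundary
point shows that every boundary point lies in one of them; so `b_A = ∑_u (|A_u| - 1)`.
Since `(A + B)_u = A_u + B_u` lies on a line, Cauchy–Davenport gives
`|(A + B)_u| - 1 ≥ (|A_u| - 1) + (|B_u| - 1)`, whence `b_{A+B} ≥ b_A + b_B`.

Translating `A` by the interior point of `B` lands inside `[A + B]`, so
`i_{A+B} ≥ |A| = b_A + 1`, and likewise `i_{A+B} ≥ b_B + 1`. As `tr(A) = b_A` and `tr(B) = b_B`,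
the claim follows from `2 √(b_A b_B) ≤ b_A + b_B ≤ 2 i_{A+B} - 2`.
-/

open scoped Pointwise Classical RealInnerProductSpace

noncomputable section

open Filter Topology

@[simp] lemma perp_apply_zero (v : Pt) : perp v 0 = v 1 := rfl

@[simp] lemma perp_apply_one (v : Pt) : perp v 1 = -v 0 := rfl

lemma inner_eq_coords (x y : Pt) : ⟪x, y⟫ = x 0 * y 0 + x 1 * y 1 := by
  simp only [PiLp.inner_apply, Fin.sum_univ_two, RCLike.inner_apply, conj_trivial]
  ring

lemma norm_sq_eq_coords (x : Pt) : ‖x‖ ^ 2 = x 0 ^ 2 + x 1 ^ 2 := by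
  simp [EuclideanSpace.norm_sq_eq, Fin.sum_univ_two]

lemma inner_perp_self (v : Pt) : ⟪perp v, v⟫ = 0 := by
  simp only [inner_eq_coords, perp_apply_zero, perp_apply_one]; ring

lemma norm_perp (v : Pt) : ‖perp v‖ = ‖v‖ := by
  rw [← pow_left_inj₀ (norm_nonneg _) (norm_nonneg _) two_ne_zero, norm_sq_eq_coords,
    norm_sq_eq_coords, perp_apply_zero, perp_apply_one, neg_sq, add_comm]

lemma perp_smul (c : ℝ) (v : Pt) : perp (c • v) = c • perp v := by
  ext i; fin_cases i <;> simp

lemma inner_perp_comm (u v : Pt) : ⟪perp u, v⟫ = -⟪perp v, u⟫ := by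
  simp only [inner_eq_coords, perp_apply_zero, perp_apply_one]; ring

/-- Coordinates with respect to the orthogonal basis `u, perp u`. -/
lemma norm_sq_smul_eq (u d : Pt) : ‖u‖ ^ 2 • d = ⟪u, d⟫ • u + ⟪perp u, d⟫ • perp u := by
  rw [norm_sq_eq_coords]
  ext i; fin_cases i <;> simp [inner_eq_coords] <;> ring

lemma norm_sq_mul_inner (u v d : Pt) :
    ‖u‖ ^ 2 * ⟪v, d⟫ = ⟪u, d⟫ * ⟪v, u⟫ + ⟪perp u, d⟫ * ⟪v, perp u⟫ := by
  rw [← real_inner_smul_right, norm_sq_smul_eq, inner_add_right, real_inner_smul_right,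
    real_inner_smul_right]

lemma eq_of_inner_eq_of_inner_perp_eq {u x y : Pt} (hu : u ≠ 0) (h : ⟪u, x⟫ = ⟪u, y⟫)
    (h' : ⟪perp u, x⟫ = ⟪perp u, y⟫) : x = y := by
  have := norm_sq_smul_eq u (x - y)
  simp only [inner_sub_right, h, h', sub_self, zero_smul, add_zero, smul_eq_zero] at this
  simpa [hu, sub_eq_zero] using this

lemma collinear_of_inner_eq {C : Set Pt} {u p : Pt} (hu : u ≠ 0) (h : ∀ y ∈ C, ⟪u, y⟫ = ⟪u, p⟫) :
    Collinear ℝ C := by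
  refine (collinear_iff_exists_forall_eq_smul_vadd C).2 ⟨p, perp u, fun y hy => ?_⟩
  refine ⟨⟪perp u, y - p⟫ / ‖u‖ ^ 2, ?_⟩
  have := norm_sq_smul_eq u (y - p)
  rw [inner_sub_right, h y hy, sub_self, zero_smul, zero_add] at this
  rw [div_eq_inv_mul, mul_smul, ← this, smul_smul, inv_mul_cancel₀ (by positivity), one_smul,
    vadd_eq_add, sub_add_cancel]

lemma mem_maxSet {A : Finset Pt} {u x : Pt} : x ∈ maxSet A u ↔ x ∈ A ∧ IsExtNormal A u x :=
  Finset.mem_filter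

lemma maxSet_subset (A : Finset Pt) (u : Pt) : maxSet A u ⊆ A := Finset.filter_subset _ _

lemma maxSet_nonempty {A : Finset Pt} (hA : A.Nonempty) (u : Pt) : (maxSet A u).Nonempty := by
  obtain ⟨x, hx, hmax⟩ := A.exists_max_image (⟪u, ·⟫) hA
  exact ⟨x, mem_maxSet.2 ⟨hx, hmax⟩⟩

lemma inner_eq_of_mem_maxSet {A : Finset Pt} {u x y : Pt} (hx : x ∈ maxSet A u)
    (hy : y ∈ maxSet A u) : ⟪u, x⟫ = ⟪u, y⟫ :=
  le_antisymm ((mem_maxSet.1 hy).2 x (mem_maxSet.1 hx).1)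
    ((mem_maxSet.1 hx).2 y (mem_maxSet.1 hy).1)

lemma maxSet_smul (A : Finset Pt) {c : ℝ} (hc : 0 < c) (u : Pt) :
    maxSet A (c • u) = maxSet A u := by
  ext x
  simp only [mem_maxSet, IsExtNormal, real_inner_smul_left, mul_le_mul_iff_right₀ hc]

lemma injOn_inner_perp_maxSet (A : Finset Pt) {u : Pt} (hu : u ≠ 0) :
    Set.InjOn (⟪perp u, ·⟫) (maxSet A u) := fun _ hx _ hy h =>
  eq_of_inner_eq_of_inner_perp_eq hu (inner_eq_of_mem_maxSet hx hy) h

def maxSetDropLast (A : Finset Pt) (u : Pt) : Finset Pt :=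
  maxSet A u \ maxSet (maxSet A u) (perp u)

lemma maxSetDropLast_smul (A : Finset Pt) {c : ℝ} (hc : 0 < c) (u : Pt) :
    maxSetDropLast A (c • u) = maxSetDropLast A u := by
  rw [maxSetDropLast, maxSetDropLast, maxSet_smul A hc, perp_smul, maxSet_smul _ hc]

lemma card_maxSetDropLast {A : Finset Pt} (hA : A.Nonempty) {u : Pt} (hu : u ≠ 0) :
    (maxSetDropLast A u).card = (maxSet A u).card - 1 := by
  have hlast : (maxSet (maxSet A u) (perp u)).card = 1 := by
    refine le_antisymm (Finset.card_le_one.2 fun x hx y hy => ?_)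
      (maxSet_nonempty (maxSet_nonempty hA u) _).card_pos
    exact injOn_inner_perp_maxSet A hu (mem_maxSet.1 hx).1 (mem_maxSet.1 hy).1
      (inner_eq_of_mem_maxSet hx hy)
  rw [maxSetDropLast, Finset.card_sdiff_of_subset (maxSet_subset _ _), hlast]

lemma notMem_maxSetDropLast_of_inner_perp_pos {C : Finset Pt} {u u' p : Pt}
    (hs : 0 < ⟪perp u, u'⟫) (hp : p ∈ maxSet C u) (hp' : p ∈ maxSet C u') :
    p ∉ maxSetDropLast C u := by
  rw [maxSetDropLast, Finset.mem_sdiff, not_and_not_right]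
  refine fun _ => mem_maxSet.2 ⟨hp, fun y hy => ?_⟩
  have key := norm_sq_mul_inner u u' (y - p)
  rw [inner_sub_right u, inner_eq_of_mem_maxSet hy hp, sub_self, zero_mul, zero_add,
    real_inner_comm (perp u) u', inner_sub_right, inner_sub_right] at key
  have hy' : ⟪u', y⟫ ≤ ⟪u', p⟫ := (mem_maxSet.1 hp').2 y (maxSet_subset C u hy)
  nlinarith [sq_nonneg ‖u‖]

lemma disjoint_maxSetDropLast {C : Finset Pt} (hC : ¬ Collinear ℝ (C : Set Pt)) {u u' : Pt}
    (hu : ‖u‖ = 1) (hu' : ‖u'‖ = 1) (hne : u ≠ u') :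
    Disjoint (maxSetDropLast C u) (maxSetDropLast C u') := by
  refine Finset.disjoint_left.2 fun p hp hp' => ?_
  have hpu : p ∈ maxSet C u := Finset.sdiff_subset hp
  have hpu' : p ∈ maxSet C u' := Finset.sdiff_subset hp'
  rcases lt_trichotomy ⟪perp u, u'⟫ 0 with hs | hs | hs
  · refine notMem_maxSetDropLast_of_inner_perp_pos ?_ hpu' hpu hp'
    rwa [inner_perp_comm, neg_pos]
  · have hu0 : u ≠ 0 := ne_zero_of_norm_ne_zero (by simp [hu])
    have key := norm_sq_mul_inner u u' u'
    rw [hs, real_inner_self_eq_norm_sq, hu, hu', real_inner_comm u] at key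
    have hsq : (⟪u, u'⟫ - 1) * (⟪u, u'⟫ + 1) = 0 := by linear_combination -key
    rcases mul_eq_zero.1 hsq with h | h
    · refine hne (sub_eq_zero.1 (norm_eq_zero.1 (pow_eq_zero_iff two_ne_zero |>.1 ?_)))
      rw [norm_sub_sq_real, hu, hu']; linear_combination -2 * h
    · have hu' : u' = -u := by
        refine eq_neg_of_add_eq_zero_right (norm_eq_zero.1 (pow_eq_zero_iff two_ne_zero |>.1 ?_))
        rw [norm_add_sq_real, hu, hu']; linear_combination 2 * h
      refine hC (collinear_of_inner_eq hu0 fun y hy => le_antisymm ((mem_maxSet.1 hpu).2 y hy) ?_)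
      simpa [hu'] using (mem_maxSet.1 hpu').2 y hy
  · exact notMem_maxSetDropLast_of_inner_perp_pos hs hpu hpu' hp

lemma inner_le_of_mem_convexHull {A : Finset Pt} {u x y : Pt} (hx : IsExtNormal A u x)
    (hy : y ∈ convexHull ℝ (A : Set Pt)) : ⟪u, y⟫ ≤ ⟪u, x⟫ :=
  convexHull_min (fun z hz => hx z hz) (convex_halfSpace_le (innerₛₗ ℝ u).isLinear _) hy

lemma mem_frontier_of_mem_maxSet {A : Finset Pt} {u x : Pt} (hu : u ≠ 0) (hx : x ∈ maxSet A u) :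
    x ∈ frontier (convexHull ℝ (A : Set Pt)) := by
  obtain ⟨hxA, hxu⟩ := mem_maxSet.1 hx
  rw [(A.finite_toSet.isClosed_convexHull ℝ).frontier_eq]
  refine ⟨subset_convexHull ℝ _ hxA, fun hint => ?_⟩
  have hray : Tendsto (fun t : ℝ => x + t • u) (𝓝[>] 0) (𝓝 x) :=
    ((Continuous.tendsto' (by fun_prop) 0 x (by simp))).mono_left nhdsWithin_le_nhds
  obtain ⟨t, ht, htpos⟩ :=
    ((hray.eventually (mem_interior_iff_mem_nhds.1 hint)).and self_mem_nhdsWithin).exists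
  have := inner_le_of_mem_convexHull hxu ht
  rw [inner_add_right, real_inner_smul_right, real_inner_self_eq_norm_sq] at this
  have : 0 < t * ‖u‖ ^ 2 := mul_pos htpos (by positivity)
  linarith

lemma nonempty_of_not_collinear {C : Finset Pt} (hC : ¬ Collinear ℝ (C : Set Pt)) :
    C.Nonempty :=
  Finset.nonempty_iff_ne_empty.2 (by rintro rfl; simp [collinear_empty] at hC)

lemma interior_convexHull_nonempty {C : Finset Pt} (hC : ¬ Collinear ℝ (C : Set Pt)) :
    (interior (convexHull ℝ (C : Set Pt))).Nonempty := by
  rw [(convex_convexHull ℝ _).interior_nonempty_iff_affineSpan_eq_top, affineSpan_convexHull]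
  by_contra htop
  rw [AffineSubspace.affineSpan_eq_top_iff_vectorSpan_eq_top_of_nonempty ℝ Pt Pt
    (Finset.coe_nonempty.2 (nonempty_of_not_collinear hC))] at htop
  have := Submodule.finrank_lt_finrank_of_lt (lt_top_iff_ne_top.2 htop)
  rw [finrank_top, finrank_euclideanSpace_fin] at this
  exact hC (collinear_iff_finrank_le_one.2 (by omega))

lemma exists_isExtNormal_of_mem_frontier {C : Finset Pt} (hC : ¬ Collinear ℝ (C : Set Pt))
    {x : Pt} (hx : x ∈ frontier (convexHull ℝ (C : Set Pt))) : ∃ u ≠ 0, IsExtNormal C u x := by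
  obtain ⟨f, c, hf, hfC, hfx⟩ := geometric_hahn_banach_of_nonempty_interior
    (convex_convexHull ℝ _) (convex_singleton x) (Set.disjoint_singleton_right.2 hx.2)
    (interior_convexHull_nonempty hC) (Set.singleton_nonempty x)
  refine ⟨(InnerProductSpace.toDual ℝ Pt).symm f, by simpa using hf, fun y hy => ?_⟩
  simp only [InnerProductSpace.toDual_symm_apply]
  exact (hfC y (subset_convexHull ℝ _ hy)).trans (hfx x rfl)

/-- For `(a, b)` and `(a', b')` in the upper half-plane with norms `n` and `n'`, a smaller
cosine `a / n ≤ a' / n'` means a larger angle, i.e. a nonnegative cross product. -/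
lemma cross_nonneg_of_cos_le {a b a' b' n n' : ℝ} (hb : 0 ≤ b) (hb' : 0 ≤ b') (hn : 0 < n)
    (hn' : 0 < n') (hnab : n ^ 2 = a ^ 2 + b ^ 2) (hn'ab : n' ^ 2 = a' ^ 2 + b' ^ 2)
    (h : a * n' ≤ a' * n) : a * b' ≤ a' * b := by
  have hsq : (a' * b) ^ 2 - (a * b') ^ 2 = (a' * n - a * n') * (a' * n + a * n') := by
    linear_combination -(a' ^ 2 * hnab) + a ^ 2 * hn'ab
  rcases le_total 0 a with ha | ha <;> rcases le_total 0 a' with ha' | ha'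
  · nlinarith [mul_nonneg ha hb', mul_nonneg ha' hb, mul_nonneg ha' hn.le, mul_nonneg ha hn'.le]
  · have ha0 : a = 0 := by nlinarith [mul_nonneg ha hn'.le]
    have ha0' : a' = 0 := by nlinarith [mul_nonneg ha hn'.le]
    simp [ha0, ha0']
  · nlinarith [mul_nonpos_iff.2 (Or.inr ⟨ha, hb'⟩), mul_nonneg ha' hb]
  · nlinarith [mul_nonpos_iff.2 (Or.inr ⟨ha, hb'⟩), mul_nonpos_iff.2 (Or.inr ⟨ha', hb⟩),
      mul_nonpos_iff.2 (Or.inr ⟨ha', hn.le⟩), mul_nonpos_iff.2 (Or.inr ⟨ha, hn'.le⟩)]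

/-- Gift wrapping: among the other points of `C`, the point `q` whose direction from `p` makes
the smallest angle with `perp u₀` leaves all of `C` on one side of the line `pq`. -/
lemma exists_left_of_isExtNormal {C : Finset Pt} {p u₀ q₀ : Pt} (hu₀ : u₀ ≠ 0)
    (hp₀ : IsExtNormal C u₀ p) (hq₀ : q₀ ∈ C) (hq₀p : q₀ ≠ p) :
    ∃ q ∈ C, q ≠ p ∧ ∀ y ∈ C, 0 ≤ ⟪perp (q - p), y - p⟫ := by
  set a : Pt → ℝ := fun y => ⟪perp u₀, y - p⟫
  set b : Pt → ℝ := fun y => -⟪u₀, y - p⟫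
  set n : Pt → ℝ := fun y => ‖u₀‖ * ‖y - p‖
  obtain ⟨q, hq, hqmax⟩ := (C.erase p).exists_max_image (fun y => a y / n y)
    ⟨q₀, Finset.mem_erase.2 ⟨hq₀p, hq₀⟩⟩
  obtain ⟨hqp, hqC⟩ := Finset.mem_erase.1 hq
  refine ⟨q, hqC, hqp, fun y hy => ?_⟩
  rcases eq_or_ne y p with rfl | hyp
  · simp
  have hb : ∀ z ∈ C, 0 ≤ b z := fun z hz => by
    simp only [b, inner_sub_right, neg_nonneg, sub_nonpos]; exact hp₀ z hz
  have hn : ∀ z ≠ p, 0 < n z := fun z hz =>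
    mul_pos (norm_pos_iff.2 hu₀) (norm_pos_iff.2 (sub_ne_zero.2 hz))
  have hnab : ∀ z, n z ^ 2 = a z ^ 2 + b z ^ 2 := fun z => by
    simp only [a, b, n, mul_pow, norm_sq_eq_coords, inner_eq_coords, perp_apply_zero,
      perp_apply_one, PiLp.sub_apply]
    ring
  have hcross : ‖u₀‖ ^ 2 * ⟪perp (q - p), y - p⟫ = a q * b y - a y * b q := by
    simp only [a, b, norm_sq_eq_coords, inner_eq_coords, perp_apply_zero, perp_apply_one,
      PiLp.sub_apply]
    ring
  have hcos : a y * n q ≤ a q * n y :=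
    (div_le_div_iff₀ (hn y hyp) (hn q hqp)).1 (hqmax y (Finset.mem_erase.2 ⟨hyp, hy⟩))
  have := cross_nonneg_of_cos_le (hb y hy) (hb q hqC) (hn y hyp) (hn q hqp) (hnab y) (hnab q) hcos
  nlinarith [pow_pos (norm_pos_iff.2 hu₀) 2]

lemma mem_maxSetDropLast_of_left {C : Finset Pt} {p q : Pt} (hp : p ∈ C) (hq : q ∈ C)
    (hqp : q ≠ p) (hleft : ∀ y ∈ C, 0 ≤ ⟪perp (q - p), y - p⟫) :
    p ∈ maxSetDropLast C (perp (p - q)) := by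
  have hv : ∀ y, ⟪perp (p - q), y⟫ - ⟪perp (p - q), p⟫ = -⟪perp (q - p), y - p⟫ := fun y => by
    simp only [inner_eq_coords, perp_apply_zero, perp_apply_one, PiLp.sub_apply]; ring
  have hpmax : p ∈ maxSet C (perp (p - q)) :=
    mem_maxSet.2 ⟨hp, fun y hy => by linarith [hv y, hleft y hy]⟩
  have hqmax : q ∈ maxSet C (perp (p - q)) :=
    mem_maxSet.2 ⟨hq, fun y hy => by linarith [hv y, hv q, hleft y hy, inner_perp_self (q - p)]⟩
  refine Finset.mem_sdiff.2 ⟨hpmax, fun hlast => ?_⟩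
  have h := (mem_maxSet.1 hlast).2 q hqmax
  have hperp : ⟪perp (perp (p - q)), q⟫ - ⟪perp (perp (p - q)), p⟫ = ‖q - p‖ ^ 2 := by
    simp only [norm_sq_eq_coords, inner_eq_coords, perp_apply_zero, perp_apply_one,
      PiLp.sub_apply]
    ring
  have := norm_pos_iff.2 (sub_ne_zero.2 hqp)
  nlinarith

lemma exists_unit_mem_maxSetDropLast {C : Finset Pt} (hC : ¬ Collinear ℝ (C : Set Pt)) {p : Pt}
    (hp : p ∈ C) (hpf : p ∈ frontier (convexHull ℝ (C : Set Pt))) :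
    ∃ u : Pt, ‖u‖ = 1 ∧ p ∈ maxSetDropLast C u := by
  obtain ⟨u₀, hu₀, hp₀⟩ := exists_isExtNormal_of_mem_frontier hC hpf
  obtain ⟨q₀, hq₀, hq₀p⟩ : ∃ q ∈ C, q ≠ p := by
    by_contra! h
    exact hC ((collinear_singleton ℝ p).subset fun y hy => h y hy)
  obtain ⟨q, hq, hqp, hleft⟩ := exists_left_of_isExtNormal hu₀ hp₀ hq₀ hq₀p
  have hv : perp (p - q) ≠ 0 := by
    rw [← norm_ne_zero_iff, norm_perp, norm_ne_zero_iff, sub_ne_zero]; exact hqp.symm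
  refine ⟨‖perp (p - q)‖⁻¹ • perp (p - q), norm_smul_inv_norm hv, ?_⟩
  rw [maxSetDropLast_smul C (inv_pos.2 (norm_pos_iff.2 hv))]
  exact mem_maxSetDropLast_of_left hp hq hqp hleft

lemma maxSet_add (A B : Finset Pt) (u : Pt) : maxSet (A + B) u = maxSet A u + maxSet B u := by
  have hadd (x y : Pt) : ⟪u, x + y⟫ = ⟪u, x⟫ + ⟪u, y⟫ := inner_add_right u x y
  ext z
  simp only [Finset.mem_add, mem_maxSet, IsExtNormal]
  constructor
  · rintro ⟨⟨a, ha, b, hb, rfl⟩, hmax⟩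
    refine ⟨a, ⟨ha, fun a' ha' => ?_⟩, b, ⟨hb, fun b' hb' => ?_⟩, rfl⟩
    · linarith [hmax (a' + b) ⟨a', ha', b, hb, rfl⟩, hadd a' b, hadd a b]
    · linarith [hmax (a + b') ⟨a, ha, b', hb', rfl⟩, hadd a b', hadd a b]
  · rintro ⟨a, ⟨ha, hamax⟩, b, ⟨hb, hbmax⟩, rfl⟩
    refine ⟨⟨a, ha, b, hb, rfl⟩, ?_⟩
    rintro _ ⟨a', ha', b', hb', rfl⟩
    linarith [hamax a' ha', hbmax b' hb', hadd a' b', hadd a b]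

lemma card_maxSet_add_le {A B : Finset Pt} (hA : A.Nonempty) (hB : B.Nonempty) {u : Pt}
    (hu : u ≠ 0) : (maxSet A u).card + (maxSet B u).card - 1 ≤ (maxSet (A + B) u).card := by
  have hcard (X : Finset Pt) : ((maxSet X u).image (innerₛₗ ℝ (perp u))).card = (maxSet X u).card :=
    Finset.card_image_of_injOn (injOn_inner_perp_maxSet X hu)
  rw [← hcard A, ← hcard B, ← hcard (A + B), maxSet_add, Finset.image_add]
  exact cauchy_davenport_add_of_linearOrder_isCancelAdd ((maxSet_nonempty hA u).image _)
    ((maxSet_nonempty hB u).image _)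

lemma card_maxSetDropLast_add_le {A B : Finset Pt} (hA : A.Nonempty) (hB : B.Nonempty) {u : Pt}
    (hu : u ≠ 0) :
    (maxSetDropLast A u).card + (maxSetDropLast B u).card ≤ (maxSetDropLast (A + B) u).card := by
  rw [card_maxSetDropLast hA hu, card_maxSetDropLast hB hu, card_maxSetDropLast (hA.add hB) hu]
  have := card_maxSet_add_le hA hB hu
  have := (maxSet_nonempty hA u).card_pos
  have := (maxSet_nonempty hB u).card_pos
  omega

lemma bdryCard_le_sum_card_maxSetDropLast {C : Finset Pt} (hC : ¬ Collinear ℝ (C : Set Pt)) :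
    ∃ S : Finset Pt, (∀ u ∈ S, ‖u‖ = 1) ∧
      bdryCard C ≤ ∑ u ∈ S, (maxSetDropLast C u).card := by
  have h : ∀ p ∈ C.filter (· ∈ frontier (convexHull ℝ (C : Set Pt))),
      ∃ u : Pt, ‖u‖ = 1 ∧ p ∈ maxSetDropLast C u := fun p hp =>
    exists_unit_mem_maxSetDropLast hC (Finset.mem_filter.1 hp).1 (Finset.mem_filter.1 hp).2
  choose! ν hν using h
  refine ⟨(C.filter (· ∈ frontier (convexHull ℝ (C : Set Pt)))).image ν,
    Finset.forall_mem_image.2 fun p hp => (hν p hp).1, ?_⟩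
  calc bdryCard C ≤ (((C.filter _).image ν).biUnion (maxSetDropLast C)).card :=
        Finset.card_le_card fun p hp =>
          Finset.mem_biUnion.2 ⟨ν p, Finset.mem_image_of_mem ν hp, (hν p hp).2⟩
    _ ≤ _ := Finset.card_biUnion_le

lemma sum_card_maxSetDropLast_le_bdryCard {C : Finset Pt} (hC : ¬ Collinear ℝ (C : Set Pt))
    {S : Finset Pt} (hS : ∀ u ∈ S, ‖u‖ = 1) :
    ∑ u ∈ S, (maxSetDropLast C u).card ≤ bdryCard C := by
  rw [← Finset.card_biUnion fun u hu u' hu' hne =>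
    disjoint_maxSetDropLast hC (hS u hu) (hS u' hu') hne]
  refine Finset.card_le_card (Finset.biUnion_subset.2 fun u hu p hp => ?_)
  have hpu : p ∈ maxSet C u := Finset.sdiff_subset hp
  have hu0 : u ≠ 0 := ne_zero_of_norm_ne_zero (by simp [hS u hu])
  exact Finset.mem_filter.2 ⟨maxSet_subset C u hpu, mem_frontier_of_mem_maxSet hu0 hpu⟩

lemma not_collinear_add {A B : Finset Pt} (hA : ¬ Collinear ℝ (A : Set Pt)) {b : Pt}
    (hb : b ∈ B) : ¬ Collinear ℝ ((A + B : Finset Pt) : Set Pt) := by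
  rw [collinear_iff_exists_forall_eq_smul_vadd] at hA ⊢
  rintro ⟨p₀, v, hv⟩
  refine hA ⟨p₀ - b, v, fun a ha => ?_⟩
  obtain ⟨r, hr⟩ := hv (a + b) (Finset.add_mem_add ha hb)
  exact ⟨r, by rw [vadd_eq_add] at hr ⊢; rw [← add_sub_assoc, ← hr, add_sub_cancel_right]⟩

theorem bdryCard_add_bdryCard_le {A B : Finset Pt} (hA : ¬ Collinear ℝ (A : Set Pt))
    (hB : ¬ Collinear ℝ (B : Set Pt)) : bdryCard A + bdryCard B ≤ bdryCard (A + B) := by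
  obtain ⟨SA, hSA, hbA⟩ := bdryCard_le_sum_card_maxSetDropLast hA
  obtain ⟨SB, hSB, hbB⟩ := bdryCard_le_sum_card_maxSetDropLast hB
  have hS : ∀ u ∈ SA ∪ SB, ‖u‖ = 1 := by
    simpa only [Finset.forall_mem_union] using ⟨hSA, hSB⟩
  obtain ⟨b, hb⟩ := nonempty_of_not_collinear hB
  calc bdryCard A + bdryCard B
      ≤ ∑ u ∈ SA ∪ SB, (maxSetDropLast A u).card + ∑ u ∈ SA ∪ SB, (maxSetDropLast B u).card :=
        add_le_add (hbA.trans (Finset.sum_le_sum_of_subset Finset.subset_union_left))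
          (hbB.trans (Finset.sum_le_sum_of_subset Finset.subset_union_right))
    _ = ∑ u ∈ SA ∪ SB, ((maxSetDropLast A u).card + (maxSetDropLast B u).card) :=
        Finset.sum_add_distrib.symm
    _ ≤ ∑ u ∈ SA ∪ SB, (maxSetDropLast (A + B) u).card := Finset.sum_le_sum fun u hu =>
        card_maxSetDropLast_add_le (nonempty_of_not_collinear hA) ⟨b, hb⟩
          (ne_zero_of_norm_ne_zero (by simp [hS u hu]))
    _ ≤ bdryCard (A + B) := sum_card_maxSetDropLast_le_bdryCard (not_collinear_add hA hb) hS

lemma bdryCard_add_intCard (A : Finset Pt) : bdryCard A + intCard A = A.card := by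
  rw [bdryCard, intCard, ← Finset.card_filter_add_card_filter_not
    (p := (· ∈ frontier (convexHull ℝ (A : Set Pt)))) (s := A)]
  congr 2
  refine Finset.filter_congr fun x hx => ?_
  rw [(A.finite_toSet.isClosed_convexHull ℝ).frontier_eq, Set.mem_sdiff, not_and_not_right]
  exact ⟨fun h _ => h, fun h => h (subset_convexHull ℝ _ hx)⟩

lemma exists_mem_interior_of_intCard_pos {A : Finset Pt} (h : 0 < intCard A) :
    ∃ a ∈ A, a ∈ interior (convexHull ℝ (A : Set Pt)) := by
  obtain ⟨a, ha⟩ := Finset.card_pos.1 h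
  exact ⟨a, Finset.mem_filter.1 ha⟩

lemma card_le_intCard_add (A : Finset Pt) {B : Finset Pt} {b : Pt} (hb : b ∈ B)
    (hbi : b ∈ interior (convexHull ℝ (B : Set Pt))) : A.card ≤ intCard (A + B) := by
  refine Finset.card_le_card_of_injOn (· + b) (fun a ha => Finset.mem_filter.2
    ⟨Finset.add_mem_add ha hb, ?_⟩) (add_left_injective b).injOn
  rw [Finset.coe_add, convexHull_add]
  exact subset_interior_add_right (Set.add_mem_add (subset_convexHull ℝ _ ha) hbi)

lemma sqrt_add_sqrt_le {a b i c : ℝ} (ha : 0 ≤ a) (hb : 0 ≤ b) (hia : a + 1 ≤ i)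
    (hib : b + 1 ≤ i) (hc : a + b ≤ c) : √a + √b ≤ √(2 * i + c - 2) := by
  refine Real.le_sqrt_of_sq_le ?_
  nlinarith [Real.sq_sqrt ha, Real.sq_sqrt hb, sq_nonneg (√a - √b)]

theorem sqrt_tr_one_interior_point
    (A B : Finset Pt) (hA : ¬ Collinear ℝ (A : Set Pt)) (hB : ¬ Collinear ℝ (B : Set Pt))
    (hiA : intCard A = 1) (hiB : intCard B = 1) :
    Real.sqrt (2 * (intCard (A + B) : ℝ) + (bdryCard (A + B) : ℝ) - 2) ≥
      Real.sqrt (2 * (intCard A : ℝ) + (bdryCard A : ℝ) - 2) +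
        Real.sqrt (2 * (intCard B : ℝ) + (bdryCard B : ℝ) - 2) := by
  obtain ⟨a, ha, hai⟩ := exists_mem_interior_of_intCard_pos (hiA ▸ one_pos)
  obtain ⟨b, hb, hbi⟩ := exists_mem_interior_of_intCard_pos (hiB ▸ one_pos)
  have hcardA : A.card = bdryCard A + 1 := by rw [← bdryCard_add_intCard, hiA]
  have hcardB : B.card = bdryCard B + 1 := by rw [← bdryCard_add_intCard, hiB]
  have hintA : bdryCard A + 1 ≤ intCard (A + B) := hcardA ▸ card_le_intCard_add A hb hbi
  have hintB : bdryCard B + 1 ≤ intCard (A + B) := by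
    rw [← hcardB, add_comm A B]; exact card_le_intCard_add B ha hai
  have hbdry := bdryCard_add_bdryCard_le hA hB
  rw [hiA, hiB, Nat.cast_one, mul_one, add_sub_cancel_left, add_sub_cancel_left]
  exact sqrt_add_sqrt_le (Nat.cast_nonneg _) (Nat.cast_nonneg _) (by exact_mod_cast hintA)
    (by exact_mod_cast hintB) (by exact_mod_cast hbdry)
end
end
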